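/- arXiv:1907.13224 — 2 statements merged into one kernel-verified Lean document; each statement's English description precedes it below -/
import Mathlib

section
/- Let ω ∈ (0,π) and λ ∈ ℝ. Suppose φ = (φ₁, φ₂) : [-ω, ω] → ℂ² is a nonzero C¹ solution of -iφ₁' + φ₁/2 = λφ₁, iφ₂' + φ₂/2 = λφ₂ satisfying the boundary conditions φ₂(±ω) = -e^{±iω}φ₁(±ω). Then λ = πk/(2ω) for some k ∈ ℤ. -/
open Complex Real Set

private lemma exp_mul_hasDerivAt (c : ℂ) (θ : ℝ) :
    HasDerivAt (fun t : ℝ => Complex.exp (c * t)) (c * Complex.exp (c * θ)) θ := by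
  have h : HasDerivAt (fun z : ℂ => Complex.exp (c * z)) (c * Complex.exp (c * θ)) (θ : ℂ) := by
    simpa [mul_comm] using ((hasDerivAt_id (θ : ℂ)).const_mul c).cexp
  exact h.comp_ofReal

private lemma exp_factor (a b : ℝ) (hab : a ≤ b) (c : ℂ) (f f' : ℝ → ℂ)
    (hd : ∀ θ ∈ Set.Icc a b, HasDerivWithinAt f (f' θ) (Set.Icc a b) θ)
    (heq : ∀ θ ∈ Set.Icc a b, f' θ = c * f θ) :
    ∀ θ ∈ Set.Icc a b, f θ * Complex.exp (-c * θ) = f a * Complex.exp (-c * a) := by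
  set g : ℝ → ℂ := fun θ => f θ * Complex.exp (-c * θ) with hg
  have hgd : ∀ θ ∈ Set.Icc a b, HasDerivWithinAt g 0 (Set.Icc a b) θ := by
    intro θ hθ
    have h := (hd θ hθ).mul ((exp_mul_hasDerivAt (-c) θ).hasDerivWithinAt)
    have h0 : f' θ * Complex.exp (-c * θ) + f θ * (-c * Complex.exp (-c * θ)) = 0 := by
      rw [heq θ hθ]; ring
    exact h0 ▸ h
  have hcont : ContinuousOn g (Set.Icc a b) := fun θ hθ => (hgd θ hθ).continuousWithinAt
  exact constant_of_has_deriv_right_zero hcont (fun x hx =>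
    (hgd x ⟨hx.1, hx.2.le⟩).mono_of_mem_nhdsWithin (Icc_mem_nhdsGE_of_mem hx))

/-- If a nonzero C¹ solution `φ = (φ₁,φ₂)` of `-iφ₁' + φ₁/2 = λφ₁`, `iφ₂' + φ₂/2 = λφ₂`
on `[-ω,ω]` satisfies the flipped boundary conditions `φ₂(±ω) = -e^{±iω}φ₁(±ω)`,
then `λ = πk/(2ω)` for some integer `k`. -/
theorem spin_orbit_spectrum (ω l : ℝ) (hω : ω ∈ Set.Ioo 0 Real.pi)
    (φ₁ φ₂ φ₁' φ₂' : ℝ → ℂ)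
    (hd1 : ∀ θ ∈ Set.Icc (-ω) ω, HasDerivWithinAt φ₁ (φ₁' θ) (Set.Icc (-ω) ω) θ)
    (hd2 : ∀ θ ∈ Set.Icc (-ω) ω, HasDerivWithinAt φ₂ (φ₂' θ) (Set.Icc (-ω) ω) θ)
    (hc1 : ContinuousOn φ₁' (Set.Icc (-ω) ω))
    (hc2 : ContinuousOn φ₂' (Set.Icc (-ω) ω))
    (heq1 : ∀ θ ∈ Set.Icc (-ω) ω, -I * φ₁' θ + φ₁ θ / 2 = (l : ℂ) * φ₁ θ)
    (heq2 : ∀ θ ∈ Set.Icc (-ω) ω, I * φ₂' θ + φ₂ θ / 2 = (l : ℂ) * φ₂ θ)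
    (hnonzero : ∃ θ ∈ Set.Icc (-ω) ω, φ₁ θ ≠ 0 ∨ φ₂ θ ≠ 0)
    (hbc1 : φ₂ ω = -Complex.exp (I * (ω : ℂ)) * φ₁ ω)
    (hbc2 : φ₂ (-ω) = -Complex.exp (-(I * (ω : ℂ))) * φ₁ (-ω)) :
    ∃ k : ℤ, l = Real.pi * k / (2 * ω) := by
  obtain ⟨hω0, hωπ⟩ := hω
  have hab : (-ω : ℝ) ≤ ω := by linarith
  set c : ℂ := I * ((l : ℂ) - 1/2) with hc
  -- rewrite the ODEs
  have heq1' : ∀ θ ∈ Set.Icc (-ω) ω, φ₁' θ = c * φ₁ θ := by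
    intro θ hθ
    have h := heq1 θ hθ
    have : -I * φ₁' θ = ((l : ℂ) - 1/2) * φ₁ θ := by linear_combination h
    have h2 := congrArg (fun z => I * z) this
    rw [hc]
    rw [show I * (-I * φ₁' θ) = φ₁' θ by
      field_simp [Complex.I_ne_zero]; ring_nf; rw [Complex.I_sq]; ring] at h2
    rw [h2]; ring
  have heq2' : ∀ θ ∈ Set.Icc (-ω) ω, φ₂' θ = -c * φ₂ θ := by
    intro θ hθ
    have h := heq2 θ hθ
    have : I * φ₂' θ = ((l : ℂ) - 1/2) * φ₂ θ := by linear_combination h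
    have h2 := congrArg (fun z => -I * z) this
    rw [show -I * (I * φ₂' θ) = φ₂' θ by
      field_simp [Complex.I_ne_zero]; ring_nf; rw [Complex.I_sq]; ring] at h2
    rw [h2, hc]; ring
  have hf1 := exp_factor (-ω) ω hab c φ₁ φ₁' hd1 heq1'
  have hf2 := exp_factor (-ω) ω hab (-c) φ₂ φ₂' hd2 heq2'
  -- φ₁(-ω) ≠ 0
  have hA : φ₁ (-ω) ≠ 0 := by
    obtain ⟨θ, hθ, hne⟩ := hnonzero
    rcases hne with h | h
    · intro h0
      have := hf1 θ hθ
      rw [h0, zero_mul] at this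
      exact h (by
        have := mul_eq_zero.mp this
        rcases this with h' | h'
        · exact h'
        · exact absurd h' (Complex.exp_ne_zero _))
    · have hB : φ₂ (-ω) ≠ 0 := by
        intro h0
        have := hf2 θ hθ
        rw [h0, zero_mul] at this
        exact h (by
          rcases mul_eq_zero.mp this with h' | h'
          · exact h'
          · exact absurd h' (Complex.exp_ne_zero _))
      intro h0
      rw [h0, mul_zero] at hbc2
      exact hB hbc2
  -- endpoint values
  have e1 := hf1 ω ⟨hab, le_refl ω⟩
  have e2 := hf2 ω ⟨hab, le_refl ω⟩
  -- from e1: φ₁ ω = φ₁(-ω) * exp (2 c ω)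
  have hφ1ω : φ₁ ω = φ₁ (-ω) * Complex.exp (2 * c * ω) := by
    have h := congrArg (fun z => z * Complex.exp (c * ω)) e1
    push_cast at h
    simp only [mul_assoc, ← Complex.exp_add] at h
    rw [show -c * (ω:ℂ) + c * ω = 0 by ring, Complex.exp_zero, mul_one,
        show -c * -(ω:ℂ) + c * ω = 2*c*ω by ring] at h
    exact h
  have hφ2ω : φ₂ ω = φ₂ (-ω) * Complex.exp (-(2 * c * ω)) := by
    have h := congrArg (fun z => z * Complex.exp (-c * ω)) e2
    push_cast at h
    simp only [mul_assoc, ← Complex.exp_add] at h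
    rw [show - -c * (ω:ℂ) + -c * ω = 0 by ring, Complex.exp_zero, mul_one,
        show - -c * -(ω:ℂ) + -c * ω = -(2*c*ω) by ring] at h
    exact h
  -- combine with boundary conditions
  have key : Complex.exp (-(I * ω)) * Complex.exp (-(2*c*ω)) =
      -Complex.exp (I * ω) * φ₁ (-ω) * Complex.exp (2*c*ω) / (-φ₁ (-ω)) := by
    have := hφ2ω
    rw [hbc2, hbc1, hφ1ω] at this
    field_simp [hA] at this ⊢
    linear_combination this
  have key2 : Complex.exp (-(I * ω) + -(2*c*ω)) = Complex.exp (I * ω + 2*c*ω) := by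
    rw [Complex.exp_add, Complex.exp_add, key]
    field_simp [hA]
  have key3 : Complex.exp (2 * (I*ω) + 4*c*ω) = 1 := by
    have := congrArg (fun z => z * Complex.exp (I * ω + 2*c*ω)) key2
    simp only [← Complex.exp_add] at this
    rw [show -(I*ω) + -(2*c*ω) + (I*ω + 2*c*ω) = 0 by ring] at this
    rw [show (2 : ℂ) * (I*ω) + 4*c*ω = I*ω + 2*c*ω + (I*ω + 2*c*ω) by ring]
    rw [Complex.exp_zero] at this
    exact this.symm
  have key4 : Complex.exp (I * (4 * l * ω)) = 1 := by
    rw [← key3]; congr 1; rw [hc]; push_cast; ring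
  obtain ⟨n, hn⟩ := Complex.exp_eq_one_iff.mp key4
  refine ⟨n, ?_⟩
  have hI : (4 * (l:ℂ) * ω) = n * (2 * Real.pi) := by
    have h2 : I * (4 * (l:ℂ) * ω) = I * ((n:ℂ) * (2 * Real.pi)) := by
      rw [hn]; ring
    exact mul_left_cancel₀ Complex.I_ne_zero h2
  have hR : 4 * l * ω = n * (2 * Real.pi) := by
    exact_mod_cast hI
  field_simp
  linarith
end

section
/- Let ω ∈ (0,π) and u⋆(r,θ) = (1/(2√ω))·(e^{-r}/√r)·(e^{-iθ/2}, -e^{iθ/2}). Then u⋆ satisfies (in polar coordinates) the equation -i(σ·e_rad(θ))(∂_r u⋆ + u⋆/(2r) - ((-iσ₃∂_θ + 1/2)u⋆)/r) = -i·u⋆ pointwise on (0,∞)×(-ω,ω). -/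
open Complex Real

lemma hasDerivAt_g (r : ℝ) (hr : 0 < r) :
    HasDerivAt (fun s => Real.exp (-s) / Real.sqrt s)
      (-(Real.exp (-r) / Real.sqrt r) - Real.exp (-r) / Real.sqrt r / (2 * r)) r := by
  have hs : Real.sqrt r ≠ 0 := (Real.sqrt_pos.mpr hr).ne'
  have h1 : HasDerivAt (fun s : ℝ => Real.exp (-s)) (-Real.exp (-r)) r := by
    simpa [Function.comp_def] using (Real.hasDerivAt_exp (-r)).comp r (hasDerivAt_neg r)
  have h2 := Real.hasDerivAt_sqrt hr.ne'
  have h : HasDerivAt (fun s => Real.exp (-s) / Real.sqrt s) _ r := h1.div h2 hs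
  convert h using 1
  have hsq : Real.sqrt r * Real.sqrt r = r := Real.mul_self_sqrt hr.le
  field_simp
  linear_combination (-1 : ℝ) * hsq

/-- First component of the defect element `u⋆` in polar coordinates. -/
noncomputable def ustar1 (ω r θ : ℝ) : ℂ :=
  (1 / (2 * Real.sqrt ω)) * ((Real.exp (-r) / Real.sqrt r : ℝ) : ℂ) *
    Complex.exp (-(I * (θ : ℂ)) / 2)

/-- Second component of the defect element `u⋆` in polar coordinates. -/
noncomputable def ustar2 (ω r θ : ℝ) : ℂ :=
  -((1 / (2 * Real.sqrt ω)) * ((Real.exp (-r) / Real.sqrt r : ℝ) : ℂ) *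
    Complex.exp ((I * (θ : ℂ)) / 2))

/-- The defect element `u⋆` satisfies, in polar coordinates, the equation
`-i(σ·e_rad)(∂_r u + u/(2r) - ((-iσ₃∂_θ + 1/2)u)/r) = -i u`, i.e. `(D* + i)u⋆ = 0`. -/
theorem ustar_defect_equation (ω : ℝ) (hω : ω ∈ Set.Ioo 0 Real.pi)
    (r θ : ℝ) (hr : 0 < r) (hθ : θ ∈ Set.Ioo (-ω) ω) :
    -I * (Complex.exp (-(I * (θ : ℂ))) *
        (deriv (fun s => ustar2 ω s θ) r + ustar2 ω r θ / (2 * (r : ℂ)) -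
          (I * deriv (fun t => ustar2 ω r t) θ + ustar2 ω r θ / 2) / (r : ℂ)))
      = -I * ustar1 ω r θ ∧
    -I * (Complex.exp (I * (θ : ℂ)) *
        (deriv (fun s => ustar1 ω s θ) r + ustar1 ω r θ / (2 * (r : ℂ)) -
          (-I * deriv (fun t => ustar1 ω r t) θ + ustar1 ω r θ / 2) / (r : ℂ)))
      = -I * ustar2 ω r θ := by
  have hgC := (hasDerivAt_g r hr).ofReal_comp
  have hid : HasDerivAt (fun t : ℝ => (t : ℂ)) 1 θ := by
    simpa using (hasDerivAt_id θ).ofReal_comp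
  have hlin1 : HasDerivAt (fun t : ℝ => -(I * (t : ℂ)) / 2) (-(I * 1) / 2) θ :=
    ((hid.const_mul I).neg).div_const 2
  have hlin2 : HasDerivAt (fun t : ℝ => (I * (t : ℂ)) / 2) ((I * 1) / 2) θ :=
    (hid.const_mul I).div_const 2
  have hexp1 : HasDerivAt (fun t : ℝ => Complex.exp (-(I * (t : ℂ)) / 2))
      ((-(I * 1) / 2) * Complex.exp (-(I * (θ : ℂ)) / 2)) θ := by
    have := (Complex.hasDerivAt_exp (-(I * (θ : ℂ)) / 2)).scomp θ hlin1
    simpa [smul_eq_mul, Function.comp_def] using this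
  have hexp2 : HasDerivAt (fun t : ℝ => Complex.exp ((I * (t : ℂ)) / 2))
      (((I * 1) / 2) * Complex.exp ((I * (θ : ℂ)) / 2)) θ := by
    have := (Complex.hasDerivAt_exp ((I * (θ : ℂ)) / 2)).scomp θ hlin2
    simpa [smul_eq_mul, Function.comp_def] using this
  have h1r : HasDerivAt (fun s => ustar1 ω s θ)
      ((1 / (2 * (Real.sqrt ω : ℂ))) *
        ((-(Real.exp (-r) / Real.sqrt r) - Real.exp (-r) / Real.sqrt r / (2 * r) : ℝ) : ℂ) *
        Complex.exp (-(I * (θ : ℂ)) / 2)) r := by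
    unfold ustar1
    exact (hgC.const_mul _).mul_const _
  have h2r : HasDerivAt (fun s => ustar2 ω s θ)
      (-((1 / (2 * (Real.sqrt ω : ℂ))) *
        ((-(Real.exp (-r) / Real.sqrt r) - Real.exp (-r) / Real.sqrt r / (2 * r) : ℝ) : ℂ) *
        Complex.exp ((I * (θ : ℂ)) / 2))) r := by
    unfold ustar2
    exact ((hgC.const_mul _).mul_const _).neg
  have h1θ : HasDerivAt (fun t => ustar1 ω r t)
      (((1 / (2 * (Real.sqrt ω : ℂ))) * ((Real.exp (-r) / Real.sqrt r : ℝ) : ℂ)) *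
        ((-(I * 1) / 2) * Complex.exp (-(I * (θ : ℂ)) / 2))) θ := by
    unfold ustar1
    exact hexp1.const_mul _
  have h2θ : HasDerivAt (fun t => ustar2 ω r t)
      (-(((1 / (2 * (Real.sqrt ω : ℂ))) * ((Real.exp (-r) / Real.sqrt r : ℝ) : ℂ)) *
        (((I * 1) / 2) * Complex.exp ((I * (θ : ℂ)) / 2)))) θ := by
    unfold ustar2
    exact (hexp2.const_mul _).neg
  rw [h1r.deriv, h2r.deriv, h1θ.deriv, h2θ.deriv]
  have hI : I ^ 2 = (-1 : ℂ) := Complex.I_sq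
  have hE12 : Complex.exp (-(I * (θ:ℂ)) / 2) * Complex.exp ((I * (θ:ℂ)) / 2) = 1 := by
    rw [← Complex.exp_add, show -(I * (θ:ℂ)) / 2 + I * (θ:ℂ) / 2 = 0 by ring, Complex.exp_zero]
  have hEneg : Complex.exp (-(I * (θ:ℂ))) =
      Complex.exp (-(I * (θ:ℂ)) / 2) * Complex.exp (-(I * (θ:ℂ)) / 2) := by
    rw [← Complex.exp_add]; ring_nf
  have hEpos : Complex.exp (I * (θ:ℂ)) =
      Complex.exp ((I * (θ:ℂ)) / 2) * Complex.exp ((I * (θ:ℂ)) / 2) := by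
    rw [← Complex.exp_add]; ring_nf
  unfold ustar1 ustar2
  push_cast
  constructor
  · rw [hEneg]
    linear_combination (-I * (1 / (2 * ((Real.sqrt ω : ℝ):ℂ))) *
        (Complex.exp (-(r:ℂ)) / ((Real.sqrt r : ℝ):ℂ)) *
        Complex.exp (-(I * (θ:ℂ)) / 2)) * hE12 +
      (-I * (1 / (2 * ((Real.sqrt ω : ℝ):ℂ))) *
        (Complex.exp (-(r:ℂ)) / ((Real.sqrt r : ℝ):ℂ)) *
        Complex.exp ((I * (θ:ℂ)) / 2) * Complex.exp (-(I * (θ:ℂ)) / 2) ^ 2 / (2 * (r:ℂ))) * hI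
  · rw [hEpos]
    linear_combination (I * (1 / (2 * ((Real.sqrt ω : ℝ):ℂ))) *
        (Complex.exp (-(r:ℂ)) / ((Real.sqrt r : ℝ):ℂ)) *
        Complex.exp ((I * (θ:ℂ)) / 2)) * hE12 +
      (I * (1 / (2 * ((Real.sqrt ω : ℝ):ℂ))) *
        (Complex.exp (-(r:ℂ)) / ((Real.sqrt r : ℝ):ℂ)) *
        Complex.exp ((I * (θ:ℂ)) / 2) ^ 2 * Complex.exp (-(I * (θ:ℂ)) / 2) / (2 * (r:ℂ))) * hI
end
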